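/- arXiv:math/9512226 — 2 statements merged into one kernel-verified Lean document; each statement's English description precedes it below -/
import Mathlib

section
/- If κ is the least measurable cardinal such that the set of supercompact cardinals below κ is unbounded in κ, then κ is strongly compact but κ is not 2^κ supercompact (there is no κ-complete fine normal ultrafilter on P_κ(2^κ)). -/
open Cardinal

/-- `F` is an ultrafilter on the carrier set `A`: it is a collection of subsets of `A`
containing `A` but not `∅`, closed under supersets (within `A`) and finite intersections,
and containing either `X` or `A \ X` for every `X ⊆ A`. -/
def IsUltrafilterOn {α : Type} (A : Set α) (F : Set (Set α)) : Prop :=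
  (∀ X ∈ F, X ⊆ A) ∧ A ∈ F ∧ ∅ ∉ F ∧
    (∀ X ∈ F, ∀ Y, Y ⊆ A → X ⊆ Y → Y ∈ F) ∧
    (∀ X ∈ F, ∀ Y ∈ F, X ∩ Y ∈ F) ∧
    (∀ X, X ⊆ A → X ∈ F ∨ A \ X ∈ F)

/-- `F` is `κ`-complete: the intersection of any (nonempty) family of fewer than `κ`
members of `F` is again in `F`. -/
def IsKComplete {α : Type} (κ : Cardinal) (F : Set (Set α)) : Prop :=
  ∀ S : Set (Set α), S.Nonempty → #S < κ → (∀ X ∈ S, X ∈ F) → ⋂₀ S ∈ F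

/-- `P_κ(λ)`: the collection of subsets of `λ` (represented as subsets of a canonical type
of order type `λ`) of cardinality less than `κ`. -/
def Pkl (κ lam : Cardinal.{0}) : Set (Set lam.ord.ToType) := {x | #x < κ}

/-- `F` is a fine filter on `P_κ(λ)`. -/
def IsFine (κ lam : Cardinal.{0}) (F : Set (Set (Set lam.ord.ToType))) : Prop :=
  ∀ a : lam.ord.ToType, {x | x ∈ Pkl κ lam ∧ a ∈ x} ∈ F

/-- `F` is a normal filter on `P_κ(λ)`. -/
def IsNormalOnPkl (κ lam : Cardinal.{0}) (F : Set (Set (Set lam.ord.ToType))) : Prop :=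
  ∀ f : Set lam.ord.ToType → lam.ord.ToType,
    {x | x ∈ Pkl κ lam ∧ f x ∈ x} ∈ F →
      ∃ a : lam.ord.ToType, {x | x ∈ Pkl κ lam ∧ f x = a} ∈ F

/-- `κ` is a measurable cardinal: `κ` is uncountable and carries a `κ`-complete
nonprincipal ultrafilter. -/
def IsMeasurableCard (κ : Cardinal.{0}) : Prop :=
  ℵ₀ < κ ∧ ∃ F : Set (Set κ.ord.ToType),
    IsUltrafilterOn Set.univ F ∧ IsKComplete κ F ∧
      ∀ a : κ.ord.ToType, ({a} : Set κ.ord.ToType) ∉ F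

/-- `κ` is `λ` strongly compact: there is a `κ`-complete fine ultrafilter on `P_κ(λ)`. -/
def IsLamStronglyCompact (κ lam : Cardinal.{0}) : Prop :=
  ∃ F : Set (Set (Set lam.ord.ToType)),
    IsUltrafilterOn (Pkl κ lam) F ∧ IsKComplete κ F ∧ IsFine κ lam F

/-- `κ` is strongly compact: `κ` is `λ` strongly compact for every `λ ≥ κ`. -/
def IsStronglyCompactCard (κ : Cardinal.{0}) : Prop :=
  ∀ lam : Cardinal.{0}, κ ≤ lam → IsLamStronglyCompact κ lam

/-- `κ` is `λ` supercompact: there is a `κ`-complete fine normal ultrafilter on `P_κ(λ)`. -/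
def IsLamSupercompact (κ lam : Cardinal.{0}) : Prop :=
  ∃ F : Set (Set (Set lam.ord.ToType)),
    IsUltrafilterOn (Pkl κ lam) F ∧ IsKComplete κ F ∧ IsFine κ lam F ∧
      IsNormalOnPkl κ lam F

/-- `κ` is supercompact: `κ` is `λ` supercompact for every `λ ≥ κ`. -/
def IsSupercompactCard (κ : Cardinal.{0}) : Prop :=
  ∀ lam : Cardinal.{0}, κ ≤ lam → IsLamSupercompact κ lam

/-!
Strong compactness is Menas's argument: for `t < κ` pick a supercompact `γ_t` with
`|t| ≤ γ_t < κ` and a `γ_t`-complete fine measure `𝒰_t` on `P_{γ_t}(λ) ⊆ P_κ(λ)`. The limit of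
the `𝒰_t` along a `κ`-complete nonprincipal ultrafilter `D` on `κ` is `κ`-complete, because
`D`-almost every `γ_t` exceeds any given `μ < κ` (`κ` is a strong limit, and `D` is uniform).

For the failure of `2^κ` supercompactness, transport a normal fine measure `𝒲` on
`P_κ(2^κ)` to `P_κ(P(κ))`, with `κ` sitting inside `P(κ)` as the singletons. Pressing down
with normality shows that for `𝒲`-almost every `x` the trace `x ∩ κ` is an ordinal `κ_x`,
every subset of `κ_x` is `C ∩ κ_x` for some `C ∈ x`, and for each fixed `A ⊆ κ` the truth of
`κ_x ∈ A` agrees with membership of `A` in the projected normal measure on `κ`. Hence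
`{A | ∃ C ∈ x, κ_x ∈ C ∧ C ∩ κ_x ⊆ A}` is a `κ_x`-complete nonprincipal ultrafilter on `κ_x`,
and closing `x` under a function that picks larger supercompacts makes `κ_x` a measurable
limit of supercompacts below `κ`.
-/

open Filter Set

/-! ### Ultrafilters on `P_κ(λ)` as ultrafilters on `Set λ` -/

namespace IsUltrafilterOn

variable {α : Type} {A : Set α} {F : Set (Set α)}

def toUltrafilter (hF : IsUltrafilterOn A F) : Ultrafilter α :=
  Ultrafilter.ofComplNotMemIff
    { sets := {s | s ∩ A ∈ F}
      univ_sets := by rw [mem_ofPred_eq, univ_inter]; exact hF.2.1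
      sets_of_superset := fun hs hst =>
        hF.2.2.2.1 _ hs _ inter_subset_right (inter_subset_inter_left _ hst)
      inter_sets := fun hs ht => by
        rw [mem_ofPred_eq, inter_inter_distrib_right]; exact hF.2.2.2.2.1 _ hs _ ht }
    fun s => by
      change sᶜ ∩ A ∉ F ↔ s ∩ A ∈ F
      have hcompl : A \ (s ∩ A) = sᶜ ∩ A := by ext; simp [and_comm]
      refine ⟨fun h => ?_, fun h h' => hF.2.2.1 ?_⟩
      · rcases hF.2.2.2.2.2 (s ∩ A) inter_subset_right with h'' | h''
        · exact h''
        · exact absurd (hcompl ▸ h'') h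
      · simpa [← inter_inter_distrib_right] using hF.2.2.2.2.1 _ h' _ h

theorem mem_toUltrafilter (hF : IsUltrafilterOn A F) {s : Set α} :
    s ∈ hF.toUltrafilter ↔ s ∩ A ∈ F :=
  Iff.rfl

theorem mem_toUltrafilter_of_subset (hF : IsUltrafilterOn A F) {s : Set α} (hs : s ⊆ A) :
    s ∈ hF.toUltrafilter ↔ s ∈ F := by
  rw [mem_toUltrafilter, inter_eq_left.2 hs]

theorem carrier_mem_toUltrafilter (hF : IsUltrafilterOn A F) : A ∈ hF.toUltrafilter :=
  (hF.mem_toUltrafilter_of_subset subset_rfl).2 hF.2.1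

theorem cardinalInterFilter_toUltrafilter (hF : IsUltrafilterOn A F) {κ : Cardinal.{0}}
    (hκ : IsKComplete κ F) : CardinalInterFilter (hF.toUltrafilter : Filter α) κ where
  cardinal_sInter_mem S hS hmem := by
    rcases S.eq_empty_or_nonempty with rfl | hne
    · simp
    have := hκ ((· ∩ A) '' S) (hne.image _) (mk_image_le.trans_lt hS)
      (by rintro _ ⟨s, hs, rfl⟩; exact hmem s hs)
    rwa [sInter_image, biInter_inter hne, ← sInter_eq_biInter] at this

end IsUltrafilterOn

namespace Ultrafilter

variable {α : Type} {A : Set α}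

theorem isUltrafilterOn_restrict (U : Ultrafilter α) (hA : A ∈ U) :
    IsUltrafilterOn A {X | X ⊆ A ∧ X ∈ U} := by
  refine ⟨fun X hX => hX.1, ⟨subset_rfl, hA⟩, fun h => U.empty_notMem h.2,
    fun X hX Y hYA hXY => ⟨hYA, mem_of_superset hX.2 hXY⟩,
    fun X hX Y hY => ⟨inter_subset_left.trans hX.1, inter_mem hX.2 hY.2⟩, fun X hXA => ?_⟩
  rcases U.mem_or_compl_mem X with h | h
  · exact Or.inl ⟨hXA, h⟩
  · exact Or.inr ⟨sdiff_subset, inter_mem hA h⟩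

theorem isKComplete_restrict (U : Ultrafilter α) {κ : Cardinal.{0}}
    [CardinalInterFilter (U : Filter α) κ] : IsKComplete κ {X | X ⊆ A ∧ X ∈ U} :=
  fun _ ⟨X, hX⟩ hS hmem => ⟨(sInter_subset_of_mem hX).trans (hmem X hX).1,
    (cardinal_sInter_mem hS).2 fun s hs => (hmem s hs).2⟩

end Ultrafilter

/-- A `κ`-complete fine ultrafilter on `P_κ(X)`, as an ultrafilter on `Set X`. -/
structure IsFineMeasure {X : Type} (κ : Cardinal.{0}) (𝒰 : Ultrafilter (Set X)) : Prop where
  eventually_mk_lt : ∀ᶠ x : Set X in 𝒰, #x < κ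
  cardinalInterFilter : CardinalInterFilter (𝒰 : Filter (Set X)) κ
  eventually_mem : ∀ a : X, ∀ᶠ x : Set X in 𝒰, a ∈ x

def Ultrafilter.IsNormal {X : Type} (𝒰 : Ultrafilter (Set X)) : Prop :=
  ∀ f : Set X → X, (∀ᶠ x in 𝒰, f x ∈ x) → ∃ a, ∀ᶠ x in 𝒰, f x = a

theorem IsUltrafilterOn.isFineMeasure_toUltrafilter {κ lam : Cardinal.{0}}
    {F : Set (Set (Set lam.ord.ToType))} (hF : IsUltrafilterOn (Pkl κ lam) F)
    (hκ : IsKComplete κ F) (hfine : IsFine κ lam F) : IsFineMeasure κ hF.toUltrafilter where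
  eventually_mk_lt := hF.carrier_mem_toUltrafilter
  cardinalInterFilter := hF.cardinalInterFilter_toUltrafilter hκ
  eventually_mem a := hF.mem_toUltrafilter.2 (by simpa [inter_comm, ofPred_and] using hfine a)

theorem isLamStronglyCompact_iff {κ lam : Cardinal.{0}} :
    IsLamStronglyCompact κ lam ↔ ∃ 𝒰 : Ultrafilter (Set lam.ord.ToType), IsFineMeasure κ 𝒰 := by
  constructor
  · rintro ⟨F, hF, hκ, hfine⟩
    exact ⟨_, hF.isFineMeasure_toUltrafilter hκ hfine⟩
  · rintro ⟨𝒰, hsmall, hκ, hmem⟩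
    exact ⟨_, 𝒰.isUltrafilterOn_restrict hsmall, 𝒰.isKComplete_restrict,
      fun a => ⟨fun x hx => hx.1, inter_mem hsmall (hmem a)⟩⟩

theorem IsLamSupercompact.exists_isNormal {κ lam : Cardinal.{0}} (h : IsLamSupercompact κ lam) :
    ∃ 𝒰 : Ultrafilter (Set lam.ord.ToType), IsFineMeasure κ 𝒰 ∧ 𝒰.IsNormal := by
  obtain ⟨F, hF, hκ, hfine, hnorm⟩ := h
  refine ⟨_, hF.isFineMeasure_toUltrafilter hκ hfine, fun f hf => ?_⟩
  obtain ⟨a, ha⟩ := hnorm f (by simpa [inter_comm, ofPred_and] using hF.mem_toUltrafilter.1 hf)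
  exact ⟨a, hF.mem_toUltrafilter.2 (by simpa [inter_comm, ofPred_and] using ha)⟩

theorem IsLamSupercompact.isLamStronglyCompact {κ lam : Cardinal.{0}}
    (h : IsLamSupercompact κ lam) : IsLamStronglyCompact κ lam :=
  let ⟨F, hF, hκ, hfine, _⟩ := h
  ⟨F, hF, hκ, hfine⟩

theorem IsFineMeasure.map_image {X Y : Type} {κ : Cardinal.{0}} {𝒰 : Ultrafilter (Set X)}
    (h : IsFineMeasure κ 𝒰) (e : X ≃ Y) : IsFineMeasure κ (𝒰.map (e '' ·)) where
  eventually_mk_lt := Filter.eventually_map.2 <|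
    h.eventually_mk_lt.mono fun _ hx => (Cardinal.mk_image_eq e.injective).trans_lt hx
  cardinalInterFilter := by
    have := h.cardinalInterFilter
    rw [Ultrafilter.coe_map]
    infer_instance
  eventually_mem b := Filter.eventually_map.2 <|
    (h.eventually_mem (e.symm b)).mono fun _ hx => Set.mem_image_equiv.2 hx

/-! ### Measurable cardinals -/

section Ordinals

variable {K : Type} [LinearOrder K] [WellFoundedLT K]

theorem exists_lt_mk_Iio_eq {c : K} {μ : Cardinal.{0}} (h : μ < #(Iio c)) :
    ∃ s < c, #(Iio s) = μ := by
  have hμ : μ.ord < Ordinal.typein (α := K) (· < ·) c := by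
    by_contra hle
    exact h.not_ge ((Ordinal.card_le_card (not_lt.1 hle)).trans_eq μ.card_ord)
  obtain ⟨s, hs⟩ := Ordinal.typein_surj (α := K) (· < ·)
    (hμ.trans (Ordinal.typein_lt_type _ c))
  refine ⟨s, (Ordinal.typein_lt_typein _).1 (hs ▸ hμ), ?_⟩
  rw [← μ.card_ord, ← hs]
  rfl

theorem exists_le_mk_Iio_map_lt {c : K} {g : K → K}
    (hg : ∀ t, #(Iio t) < #(Iio (g t))) (hc : ∀ t < c, g t < c)
    {β : Cardinal.{0}} (hβ : β < #(Iio c)) :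
    ∃ t, β ≤ #(Iio (g t)) ∧ #(Iio (g t)) < #(Iio c) := by
  obtain ⟨s, hs, rfl⟩ := exists_lt_mk_Iio_eq hβ
  exact ⟨s, (hg s).le,
    (hg (g s)).trans_le (Cardinal.mk_le_mk_of_subset (Iio_subset_Iio (hc _ (hc s hs)).le))⟩

end Ordinals

theorem exists_mk_Iio_eq {κ μ : Cardinal.{0}} (h : μ < κ) : ∃ s : κ.ord.ToType, #(Iio s) = μ := by
  obtain ⟨s, hs⟩ := Ordinal.typein_surj (α := κ.ord.ToType) (· < ·)
    (by rw [Ordinal.type_toType]; exact Cardinal.ord_lt_ord.2 h)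
  refine ⟨s, ?_⟩
  rw [← μ.card_ord, ← hs]
  rfl

theorem mk_Iio_toType_lt {κ : Cardinal.{0}} (t : κ.ord.ToType) : #(Iio t) < κ := by
  simpa using Cardinal.mk_Iio_lt t

theorem Ultrafilter.eventually_iff_eventually {α : Type} (U : Ultrafilter α) (p : α → Prop) :
    ∀ᶠ a in U, (p a ↔ ∀ᶠ a' in U, p a') := by
  by_cases hp : ∀ᶠ a in U, p a
  · exact hp.mono fun a ha => iff_of_true ha hp
  · exact (Ultrafilter.eventually_not.2 hp).mono fun a ha => iff_of_false ha hp

section CompleteUltrafilter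

variable {α : Type} {κ : Cardinal.{0}} {U : Ultrafilter α} [CardinalInterFilter (U : Filter α) κ]

theorem Ultrafilter.eventually_notMem_of_mk_lt (hU : ∀ a, {a} ∉ U) {s : Set α} (hs : #s < κ) :
    ∀ᶠ a in U, a ∉ s := by
  have : ∀ᶠ a in U, ∀ b ∈ s, a ≠ b :=
    (eventually_cardinal_ball hs).2 fun b _ => U.compl_mem_iff_notMem.2 (hU b)
  exact this.mono fun a ha has => ha a has rfl

theorem Ultrafilter.two_power_lt_mk (hU : ∀ a, {a} ∉ U) {μ : Cardinal.{0}} (hμ : μ < κ) :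
    2 ^ μ < #α := by
  by_contra! hle
  obtain ⟨f⟩ : Nonempty (α ↪ Set μ.ord.ToType) := by
    rwa [← Cardinal.le_def, Cardinal.mk_set, Cardinal.mk_ord_toType]
  set S₀ := {m | ∀ᶠ a in U, m ∈ f a}
  have hdecide : ∀ m, ∀ᶠ a in U, (m ∈ f a ↔ m ∈ S₀) :=
    fun m => U.eventually_iff_eventually (m ∈ f ·)
  have hconst : ∀ᶠ a in U, f a = S₀ :=
    ((eventually_cardinal_forall (by rwa [Cardinal.mk_ord_toType])).2 hdecide).mono
      fun a ha => Set.ext ha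
  obtain ⟨a₀, ha₀⟩ := hconst.exists
  exact hU a₀ (mem_of_superset hconst fun a ha => f.injective (ha.trans ha₀.symm))

end CompleteUltrafilter

theorem IsMeasurableCard.exists_ultrafilter {κ : Cardinal.{0}} (h : IsMeasurableCard κ) :
    ∃ D : Ultrafilter κ.ord.ToType, CardinalInterFilter (D : Filter κ.ord.ToType) κ ∧
      ∀ a, {a} ∉ D := by
  obtain ⟨-, F, hF, hκ, hnp⟩ := h
  refine ⟨hF.toUltrafilter, hF.cardinalInterFilter_toUltrafilter hκ, fun a ha => hnp a ?_⟩
  rwa [hF.mem_toUltrafilter_of_subset (subset_univ _)] at ha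

theorem IsMeasurableCard.isStrongLimit {κ : Cardinal.{0}} (h : IsMeasurableCard κ) :
    IsStrongLimit κ := by
  obtain ⟨D, hD, hnp⟩ := h.exists_ultrafilter
  refine ⟨(Cardinal.aleph0_pos.trans h.1).ne', fun μ hμ => ?_⟩
  simpa using D.two_power_lt_mk hnp hμ

theorem isMeasurableCard_mk_of_mem {α : Type} {U : Ultrafilter α} {s : Set α} (hs : s ∈ U)
    (hℵ : ℵ₀ < #s) [CardinalInterFilter (U : Filter α) #s] (hU : ∀ a, {a} ∉ U) :
    IsMeasurableCard #s := by
  obtain ⟨e⟩ : Nonempty ((#s).ord.ToType ≃ s) := Cardinal.eq.1 (Cardinal.mk_ord_toType _)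
  have hinj : Function.Injective (Subtype.val ∘ e) := Subtype.val_injective.comp e.injective
  have hrange : range (Subtype.val ∘ e) ∈ U := by
    rwa [range_comp, e.range_eq_univ, image_univ, Subtype.range_coe]
  set V := U.comap hinj hrange
  have : CardinalInterFilter (V : Filter (#s).ord.ToType) #s := by
    rw [Ultrafilter.coe_comap]; infer_instance
  refine ⟨hℵ, _, V.isUltrafilterOn_restrict univ_mem, V.isKComplete_restrict, fun a ha => ?_⟩
  have := (U.mem_comap hinj hrange).1 ha.2
  rw [image_singleton] at this
  exact hU _ this

theorem Ultrafilter.eventually_lt_mk_Iio {κ : Cardinal.{0}} {D : Ultrafilter κ.ord.ToType}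
    [CardinalInterFilter (D : Filter κ.ord.ToType) κ] (hD : ∀ a, {a} ∉ D)
    (hκ : Order.IsSuccLimit κ) {μ : Cardinal.{0}} (hμ : μ < κ) :
    ∀ᶠ t : κ.ord.ToType in D, μ < #(Iio t) := by
  obtain ⟨s, hs⟩ := exists_mk_Iio_eq (hκ.succ_lt hμ)
  filter_upwards [D.eventually_notMem_of_mk_lt hD (mk_Iio_toType_lt s)] with t ht
  calc μ < Order.succ μ := Order.lt_succ_of_not_isMax (not_isMax μ)
    _ = #(Iio s) := hs.symm
    _ ≤ #(Iio t) := Cardinal.mk_le_mk_of_subset (Iio_subset_Iio (not_lt.1 ht))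

/-! ### Strong compactness -/

theorem Ultrafilter.eventually_bind {α β : Type} {D : Ultrafilter α} {m : α → Ultrafilter β}
    {p : β → Prop} : (∀ᶠ b in D.bind m, p b) ↔ ∀ᶠ a in D, ∀ᶠ b in m a, p b :=
  Iff.rfl

/-- Menas's limit construction. -/
theorem IsFineMeasure.bind {X I : Type} {κ : Cardinal.{0}} {D : Ultrafilter I}
    [CardinalInterFilter (D : Filter I) κ] {γ : I → Cardinal.{0}} {𝒰 : I → Ultrafilter (Set X)}
    (h𝒰 : ∀ i, IsFineMeasure (γ i) (𝒰 i)) (hγκ : ∀ i, γ i ≤ κ)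
    (hγ : ∀ μ < κ, ∀ᶠ i in D, μ < γ i) : IsFineMeasure κ (D.bind 𝒰) where
  eventually_mk_lt := Ultrafilter.eventually_bind.2 <| .of_forall fun i =>
    (h𝒰 i).eventually_mk_lt.mono fun _ hx => hx.trans_le (hγκ i)
  cardinalInterFilter := ⟨fun S hS hmem => by
    change ∀ᶠ i in D, ⋂₀ S ∈ 𝒰 i
    have hall : ∀ᶠ i in D, ∀ s ∈ S, s ∈ 𝒰 i := (eventually_cardinal_ball hS).2 hmem
    filter_upwards [hall, hγ _ hS] with i hi hlt
    have := (h𝒰 i).cardinalInterFilter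
    exact (cardinal_sInter_mem hlt).2 hi⟩
  eventually_mem a := Ultrafilter.eventually_bind.2 <| .of_forall fun i => (h𝒰 i).eventually_mem a

theorem IsMeasurableCard.isStronglyCompactCard {κ : Cardinal.{0}} (hκ : IsMeasurableCard κ)
    (hunb : ∀ β < κ, ∃ γ, β ≤ γ ∧ γ < κ ∧ IsSupercompactCard γ) : IsStronglyCompactCard κ := by
  intro lam hlam
  obtain ⟨D, hD, hnp⟩ := hκ.exists_ultrafilter
  choose γ hγ_ge hγ_lt hγ using fun t : κ.ord.ToType => hunb _ (mk_Iio_toType_lt t)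
  choose 𝒰 h𝒰 using fun t =>
    isLamStronglyCompact_iff.1 (hγ t lam ((hγ_lt t).le.trans hlam)).isLamStronglyCompact
  refine isLamStronglyCompact_iff.2 ⟨_, IsFineMeasure.bind (D := D) h𝒰 (fun t => (hγ_lt t).le) ?_⟩
  intro μ hμ
  filter_upwards [D.eventually_lt_mk_Iio hnp hκ.isStrongLimit.isSuccLimit hμ] with t ht
  exact ht.trans_le (hγ_ge t)

/-! ### Reflecting measurability below `κ` -/

namespace Ultrafilter.IsNormal

variable {X : Type} {𝒰 : Ultrafilter (Set X)}

theorem exists_eventually (hn : 𝒰.IsNormal) {P : Set X → X → Prop}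
    (h : ∀ᶠ x in 𝒰, ∃ a ∈ x, P x a) : ∃ a, ∀ᶠ x in 𝒰, P x a := by
  obtain ⟨f, hf⟩ := h.choice
  obtain ⟨a, ha⟩ := hn f (hf.mono fun _ hx => hx.1)
  exact ⟨a, (hf.and ha).mono fun x ⟨hx, hfx⟩ => hfx ▸ hx.2⟩

theorem eventually_forall_mem (hn : 𝒰.IsNormal) {P : X → Set X → Prop}
    (h : ∀ a, ∀ᶠ x in 𝒰, P a x) : ∀ᶠ x in 𝒰, ∀ a ∈ x, P a x := by
  by_contra hc
  rw [← Ultrafilter.eventually_not] at hc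
  push Not at hc
  obtain ⟨a, ha⟩ := hn.exists_eventually hc
  obtain ⟨x, hx, hx'⟩ := ((h a).and ha).exists
  exact hx' hx

theorem eventually_forall_mem_mem (hn : 𝒰.IsNormal) (hfine : ∀ a : X, ∀ᶠ x : Set X in 𝒰, a ∈ x)
    (g : X → X) : ∀ᶠ x : Set X in 𝒰, ∀ a ∈ x, g a ∈ x :=
  hn.eventually_forall_mem fun a => hfine (g a)

theorem eventually_forall_mem_forall_mem_mem (hn : 𝒰.IsNormal)
    (hfine : ∀ a : X, ∀ᶠ x : Set X in 𝒰, a ∈ x) (g : X → X → X) :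
    ∀ᶠ x : Set X in 𝒰, ∀ a ∈ x, ∀ b ∈ x, g a b ∈ x :=
  hn.eventually_forall_mem fun a => hn.eventually_forall_mem_mem hfine (g a)

theorem map_image {Y : Type} (hn : 𝒰.IsNormal) (e : X ≃ Y) : (𝒰.map (e '' ·)).IsNormal := by
  intro f hf
  obtain ⟨a, ha⟩ := hn (fun x => e.symm (f (e '' x)))
    (Filter.eventually_map.1 hf |>.mono fun _ hx => Set.mem_image_equiv.1 hx)
  exact ⟨e a, Filter.eventually_map.2 <| ha.mono fun x hx => by rw [← hx, e.apply_symm_apply]⟩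

end Ultrafilter.IsNormal

section Trace

variable {K : Type}

/-- `x ∩ κ` in the paper's notation, `κ` being embedded in `P(κ)` as the singletons. -/
def trace (x : Set (Set K)) : Set K := {t | {t} ∈ x}

theorem mk_trace_le (x : Set (Set K)) : #(trace x) ≤ #x := by
  rw [← Cardinal.mk_image_eq singleton_injective]
  exact Cardinal.mk_le_mk_of_subset (image_subset_iff.2 fun _ ht => ht)

namespace Ultrafilter.IsNormal

variable {𝒰 : Ultrafilter (Set (Set K))}

theorem exists_eventually_trace (hn : 𝒰.IsNormal) {P : Set (Set K) → K → Prop}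
    (h : ∀ᶠ x in 𝒰, ∃ t ∈ trace x, P x t) : ∃ t, ∀ᶠ x in 𝒰, P x t := by
  obtain ⟨a, ha⟩ := hn.exists_eventually (P := fun x a => ∃ t, a = {t} ∧ P x t)
    (h.mono fun _ ⟨t, ht, hP⟩ => ⟨{t}, ht, t, rfl, hP⟩)
  obtain ⟨-, t₀, rfl, -⟩ := ha.exists
  exact ⟨t₀, ha.mono fun _ ⟨t, ht, hP⟩ => by rwa [singleton_injective ht]⟩

theorem eventually_forall_mem_trace (hn : 𝒰.IsNormal) {P : K → Set (Set K) → Prop}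
    (h : ∀ t, ∀ᶠ x in 𝒰, P t x) : ∀ᶠ x in 𝒰, ∀ t ∈ trace x, P t x := by
  refine (hn.eventually_forall_mem (P := fun a x => ∀ t, a = {t} → P t x) fun a => ?_).mono
    fun x hx t ht => hx {t} ht t rfl
  by_cases ha : ∃ t, a = {t}
  · obtain ⟨t, rfl⟩ := ha
    exact (h t).mono fun _ hx s hs => singleton_injective hs ▸ hx
  · exact .of_forall fun _ s hs => (ha ⟨s, hs⟩).elim

theorem eventually_forall_mem_trace_mem (hn : 𝒰.IsNormal)
    (hfine : ∀ a : Set K, ∀ᶠ x : Set (Set K) in 𝒰, a ∈ x) (g : K → K) :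
    ∀ᶠ x in 𝒰, ∀ t ∈ trace x, g t ∈ trace x :=
  (hn.eventually_forall_mem_mem hfine (g '' ·)).mono fun _ hx t ht => by
    simpa [trace] using hx _ ht

theorem eventually_forall_mem_trace_forall_mem_trace_mem (hn : 𝒰.IsNormal)
    (hfine : ∀ a : Set K, ∀ᶠ x : Set (Set K) in 𝒰, a ∈ x) (g : K → K → K) :
    ∀ᶠ x in 𝒰, ∀ s ∈ trace x, ∀ t ∈ trace x, g s t ∈ trace x :=
  (hn.eventually_forall_mem_forall_mem_mem hfine (image2 g)).mono fun _ hx s hs t ht => by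
    simpa [trace] using hx _ hs _ ht

end Ultrafilter.IsNormal

variable [LinearOrder K] [Nonempty K]

/-- `κ_x`, the point with `trace x = Iio κ_x` when the trace is an initial segment
(a junk value otherwise). -/
noncomputable def traceBound (x : Set (Set K)) : K := Classical.epsilon fun t => trace x = Iio t

theorem trace_eq_Iio_traceBound {x : Set (Set K)} (h : ∃ t, trace x = Iio t) :
    trace x = Iio (traceBound x) :=
  Classical.epsilon_spec h

def derivedSets (x : Set (Set K)) : Set (Set K) :=
  {A | ∃ C ∈ x, traceBound x ∈ C ∧ C ∩ trace x ⊆ A}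

/-- The properties of almost every `x` that make `derivedSets x` a `#(trace x)`-complete
nonprincipal ultrafilter; a pairing function `π` codes `κ_x`-sequences of sets by single sets. -/
structure IsReflecting (π : K → K → K) (x : Set (Set K)) : Prop where
  trace_eq : trace x = Iio (traceBound x)
  univ_mem : Set.univ ∈ x
  inter_mem : ∀ C ∈ x, ∀ D ∈ x, C ∩ D ∈ x
  compl_mem : ∀ C ∈ x, Cᶜ ∈ x
  covers : ∀ A ⊆ trace x, ∃ C ∈ x, C ∩ trace x = A
  inter_trace_nonempty : ∀ C ∈ x, traceBound x ∈ C → (C ∩ trace x).Nonempty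
  map₂_mem : ∀ s ∈ trace x, ∀ t ∈ trace x, π s t ∈ trace x
  biInter_preimage_mem : ∀ C ∈ x, ∀ s ∈ trace x,
    (∀ i < s, π i ⁻¹' C ∈ derivedSets x) → (⋂ i < s, π i ⁻¹' C) ∈ derivedSets x

end Trace

section NormalMeasure

variable {κ : Cardinal.{0}} {𝒲 : Ultrafilter (Set (Set κ.ord.ToType))}
  (h𝒲 : IsFineMeasure κ 𝒲) (hn : 𝒲.IsNormal)
include h𝒲 hn

theorem eventually_trace_eq_Iio [Nonempty κ.ord.ToType] :
    ∀ᶠ x : Set (Set κ.ord.ToType) in 𝒲, trace x = Iio (traceBound x) := by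
  have : CardinalInterFilter (𝒲 : Filter (Set (Set κ.ord.ToType))) κ := h𝒲.cardinalInterFilter
  have hlower : ∀ᶠ x : Set (Set κ.ord.ToType) in 𝒲, ∀ t ∈ trace x, Iio t ⊆ trace x := by
    by_contra hc
    rw [← Ultrafilter.eventually_not] at hc
    push Not at hc
    obtain ⟨t, ht⟩ := hn.exists_eventually_trace hc
    have hsub : ∀ᶠ x in 𝒲, Iio t ⊆ trace x :=
      (eventually_cardinal_ball (mk_Iio_toType_lt t)).2 fun s _ => h𝒲.eventually_mem {s}
    obtain ⟨x, hx, hx'⟩ := (ht.and hsub).exists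
    exact hx hx'
  filter_upwards [hlower, h𝒲.eventually_mk_lt] with x hx hsmall
  have hlow : IsLowerSet (trace x) := fun s t hts ht => hts.eq_or_lt.elim (· ▸ ht) (hx s ht ·)
  refine trace_eq_Iio_traceBound (hlow.eq_univ_or_Iio.resolve_left fun huniv => ?_)
  have := (mk_trace_le x).trans_lt hsmall
  rw [huniv, Cardinal.mk_univ, Cardinal.mk_ord_toType] at this
  exact this.false

theorem eventually_covers :
    ∀ᶠ x : Set (Set κ.ord.ToType) in 𝒲, ∀ A ⊆ trace x, ∃ C ∈ x, C ∩ trace x = A := by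
  by_contra hc
  rw [← Ultrafilter.eventually_not] at hc
  push Not at hc
  obtain ⟨A, hA⟩ := hc.choice
  -- `B` puts each `t` on the side where almost every `A x` puts it.
  set B := {t | ∀ᶠ x in 𝒲, t ∈ A x}
  have hB : ∀ᶠ x in 𝒲, ∀ t ∈ trace x, (t ∈ A x ↔ t ∈ B) :=
    hn.eventually_forall_mem_trace fun t => 𝒲.eventually_iff_eventually (fun x => t ∈ A x)
  obtain ⟨x, ⟨hAx, hcode⟩, hBx, hBmem⟩ := (hA.and (hB.and (h𝒲.eventually_mem B))).exists
  exact hcode B hBmem (Set.ext fun t => ⟨fun ⟨htB, ht⟩ => (hBx t ht).2 htB,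
    fun ht => ⟨(hBx t (hAx ht)).1 ht, hAx ht⟩⟩)

variable [Nonempty κ.ord.ToType]

theorem eventually_inter_trace_nonempty : ∀ᶠ x : Set (Set κ.ord.ToType) in 𝒲,
    ∀ C ∈ x, traceBound x ∈ C → (C ∩ trace x).Nonempty := by
  by_contra hc
  rw [← Ultrafilter.eventually_not] at hc
  push Not at hc
  obtain ⟨C, hC⟩ := hn.exists_eventually hc
  -- `κ_{x₀} ∈ C` lies in the trace of almost every `x`.
  obtain ⟨x₀, hx₀, -⟩ := hC.exists
  obtain ⟨x, ⟨-, hx⟩, ht⟩ := (hC.and (h𝒲.eventually_mem {traceBound x₀})).exists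
  exact hx.subset ⟨hx₀, ht⟩

theorem eventually_mem_derivedSets_iff (A : Set κ.ord.ToType) :
    ∀ᶠ x in 𝒲, (A ∈ derivedSets x ↔ traceBound x ∈ A) := by
  filter_upwards [eventually_inter_trace_nonempty h𝒲 hn,
    hn.eventually_forall_mem_forall_mem_mem h𝒲.eventually_mem (· ∩ ·),
    h𝒲.eventually_mem A, h𝒲.eventually_mem Aᶜ] with x hne hinter hA hAc
  refine ⟨fun ⟨C, hC, htC, hCA⟩ => ?_, fun ht => ⟨A, hA, ht, inter_subset_left⟩⟩
  by_contra htA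
  obtain ⟨u, ⟨huC, huA⟩, hu⟩ := hne _ (hinter C hC Aᶜ hAc) ⟨htC, htA⟩
  exact huA (hCA ⟨huC, hu⟩)

theorem eventually_biInter_preimage_mem (π : κ.ord.ToType → κ.ord.ToType → κ.ord.ToType) :
    ∀ᶠ x : Set (Set κ.ord.ToType) in 𝒲, ∀ C ∈ x, ∀ s ∈ trace x,
      (∀ i < s, π i ⁻¹' C ∈ derivedSets x) → (⋂ i < s, π i ⁻¹' C) ∈ derivedSets x := by
  have : CardinalInterFilter (𝒲 : Filter (Set (Set κ.ord.ToType))) κ := h𝒲.cardinalInterFilter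
  by_contra hc
  rw [← Ultrafilter.eventually_not] at hc
  push Not at hc
  obtain ⟨C, hC⟩ := hn.exists_eventually hc
  obtain ⟨s, hs⟩ := hn.exists_eventually_trace hC
  have hsec : ∀ i ∈ Iio s, ∀ᶠ x in 𝒲, traceBound x ∈ π i ⁻¹' C := fun i hi =>
    (hs.and (eventually_mem_derivedSets_iff h𝒲 hn _)).mono fun _ ⟨hx, hiff⟩ => hiff.1 (hx.1 i hi)
  have hall : ∀ᶠ x in 𝒲, traceBound x ∈ ⋂ i < s, π i ⁻¹' C := by
    simpa only [mem_iInter, mem_Iio] using (eventually_cardinal_ball (mk_Iio_toType_lt s)).2 hsec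
  obtain ⟨x, ⟨-, hx⟩, hiff, htx⟩ :=
    (hs.and ((eventually_mem_derivedSets_iff h𝒲 hn _).and hall)).exists
  exact hx (hiff.2 htx)

theorem eventually_isReflecting (π : κ.ord.ToType → κ.ord.ToType → κ.ord.ToType) :
    ∀ᶠ x in 𝒲, IsReflecting π x := by
  filter_upwards [eventually_trace_eq_Iio h𝒲 hn, h𝒲.eventually_mem Set.univ,
    hn.eventually_forall_mem_forall_mem_mem h𝒲.eventually_mem (· ∩ ·),
    hn.eventually_forall_mem_mem h𝒲.eventually_mem compl, eventually_covers h𝒲 hn,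
    eventually_inter_trace_nonempty h𝒲 hn,
    hn.eventually_forall_mem_trace_forall_mem_trace_mem h𝒲.eventually_mem π,
    eventually_biInter_preimage_mem h𝒲 hn π] with x h₁ h₂ h₃ h₄ h₅ h₆ h₇ h₈
  exact ⟨h₁, h₂, h₃, h₄, h₅, h₆, h₇, h₈⟩

end NormalMeasure

namespace IsReflecting

variable {K : Type} [LinearOrder K] [Nonempty K] {π : K → K → K} {x : Set (Set K)}

def ultrafilter (hx : IsReflecting π x) : Ultrafilter K :=
  Ultrafilter.ofComplNotMemIff
    { sets := derivedSets x
      univ_sets := ⟨Set.univ, hx.univ_mem, trivial, subset_univ _⟩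
      sets_of_superset := fun ⟨C, hC, ht, hCA⟩ hAB => ⟨C, hC, ht, hCA.trans hAB⟩
      inter_sets := fun ⟨C, hC, ht, hCA⟩ ⟨D, hD, ht', hDB⟩ =>
        ⟨C ∩ D, hx.inter_mem C hC D hD, ⟨ht, ht'⟩,
          fun u hu => ⟨hCA ⟨hu.1.1, hu.2⟩, hDB ⟨hu.1.2, hu.2⟩⟩⟩ }
    fun A => by
      change Aᶜ ∉ derivedSets x ↔ A ∈ derivedSets x
      refine ⟨fun hAc => ?_, fun ⟨C, hC, ht, hCA⟩ ⟨D, hD, ht', hDA⟩ => ?_⟩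
      · obtain ⟨C, hC, hCA⟩ := hx.covers (A ∩ trace x) inter_subset_right
        by_cases ht : traceBound x ∈ C
        · exact ⟨C, hC, ht, hCA ▸ inter_subset_left⟩
        · refine (hAc ⟨Cᶜ, hx.compl_mem C hC, ht, fun u ⟨huC, hu⟩ huA => huC ?_⟩).elim
          exact (hCA.symm ▸ ⟨huA, hu⟩ : u ∈ C ∩ trace x).1
      · obtain ⟨u, ⟨huC, huD⟩, hu⟩ := hx.inter_trace_nonempty _ (hx.inter_mem C hC D hD) ⟨ht, ht'⟩
        exact hDA ⟨huD, hu⟩ (hCA ⟨huC, hu⟩)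

variable (hx : IsReflecting π x)
include hx

theorem trace_mem_ultrafilter : trace x ∈ hx.ultrafilter :=
  ⟨Set.univ, hx.univ_mem, trivial, inter_subset_right⟩

theorem singleton_notMem_ultrafilter (s : K) : {s} ∉ hx.ultrafilter := by
  rw [← Ultrafilter.compl_mem_iff_notMem]
  by_cases hs : s ∈ trace x
  · refine ⟨{s}ᶜ, hx.compl_mem _ hs, fun (h : traceBound x = s) => ?_, inter_subset_left⟩
    rw [hx.trace_eq, ← h] at hs
    exact lt_irrefl _ hs
  · exact mem_of_superset hx.trace_mem_ultrafilter fun u hu (h : u = s) => hs (h ▸ hu)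

theorem exists_preimage_inter_trace_eq (hπ : Function.Injective2 π) {s : K} (hs : s ∈ trace x)
    (b : Iio s → Set K) : ∃ C ∈ x, ∀ i : Iio s, π i ⁻¹' C ∩ trace x = b i ∩ trace x := by
  have hi : ∀ i : Iio s, (i : K) ∈ trace x := fun i => by
    rw [hx.trace_eq] at hs ⊢
    exact i.2.trans hs
  obtain ⟨C, hC, hCR⟩ := hx.covers (⋃ i : Iio s, π i '' (b i ∩ trace x))
    (iUnion_subset fun i => image_subset_iff.2 fun u hu => hx.map₂_mem _ (hi i) _ hu.2)
  refine ⟨C, hC, fun i => Set.ext fun u => ⟨fun ⟨huC, hu⟩ => ⟨?_, hu⟩, fun ⟨hub, hu⟩ => ⟨?_, hu⟩⟩⟩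
  · have : π i u ∈ C ∩ trace x := ⟨huC, hx.map₂_mem _ (hi i) _ hu⟩
    rw [hCR] at this
    obtain ⟨j, v, hv, hvu⟩ := mem_iUnion.1 this
    obtain ⟨hji, rfl⟩ := hπ hvu
    exact Subtype.ext hji ▸ hv.1
  · have : π i u ∈ ⋃ i : Iio s, π i '' (b i ∩ trace x) := mem_iUnion.2 ⟨i, u, ⟨hub, hu⟩, rfl⟩
    rw [← hCR] at this
    exact this.1

theorem cardinalInterFilter_ultrafilter [WellFoundedLT K] (hπ : Function.Injective2 π) :
    CardinalInterFilter (hx.ultrafilter : Filter K) #(trace x) := ⟨fun S hS hmem => by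
  rw [hx.trace_eq] at hS
  obtain ⟨s, hs, hcard⟩ := exists_lt_mk_Iio_eq hS
  obtain ⟨e⟩ := Cardinal.eq.1 hcard
  have hs' : s ∈ trace x := hx.trace_eq ▸ hs
  obtain ⟨C, hC, hCe⟩ := hx.exists_preimage_inter_trace_eq hπ hs' fun i => e i
  have hsec : ∀ i < s, π i ⁻¹' C ∈ derivedSets x := fun i hi =>
    mem_of_superset (Filter.inter_mem (hmem _ (e ⟨i, hi⟩).2) hx.trace_mem_ultrafilter)
      ((hCe ⟨i, hi⟩).symm.subset.trans inter_subset_left)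
  refine mem_of_superset
    (Filter.inter_mem (hx.biInter_preimage_mem C hC s hs' hsec) hx.trace_mem_ultrafilter) ?_
  rintro u ⟨hu, huT⟩ A hA
  obtain ⟨i, hi⟩ := e.surjective ⟨A, hA⟩
  have : u ∈ π i ⁻¹' C ∩ trace x := ⟨mem_iInter₂.1 hu i i.2, huT⟩
  rw [hCe i, hi] at this
  exact this.1⟩

theorem isMeasurableCard [WellFoundedLT K] (hπ : Function.Injective2 π)
    (hℵ : ℵ₀ < #(trace x)) : IsMeasurableCard #(trace x) :=
  have := hx.cardinalInterFilter_ultrafilter hπ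
  isMeasurableCard_mk_of_mem hx.trace_mem_ultrafilter hℵ hx.singleton_notMem_ultrafilter

end IsReflecting

theorem exists_lt_isMeasurableCard_of_isLamSupercompact {κ : Cardinal.{0}}
    (hκ : IsMeasurableCard κ) (hunb : ∀ β < κ, ∃ γ, β ≤ γ ∧ γ < κ ∧ IsSupercompactCard γ)
    (h : IsLamSupercompact κ (2 ^ κ)) :
    ∃ κ' < κ, IsMeasurableCard κ' ∧ ∀ β < κ', ∃ γ, β ≤ γ ∧ γ < κ' ∧ IsSupercompactCard γ := by
  have hlim := hκ.isStrongLimit.isSuccLimit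
  have : Nonempty κ.ord.ToType := Cardinal.nonempty_ord_toType hκ.isStrongLimit.ne_zero
  obtain ⟨𝒲₀, h𝒲₀, hn₀⟩ := h.exists_isNormal
  obtain ⟨e⟩ : Nonempty ((2 ^ κ : Cardinal.{0}).ord.ToType ≃ Set κ.ord.ToType) :=
    Cardinal.eq.1 (by simp)
  have h𝒲 := h𝒲₀.map_image e
  have hn := hn₀.map_image e
  obtain ⟨π⟩ : Nonempty (κ.ord.ToType × κ.ord.ToType ≃ κ.ord.ToType) :=
    Cardinal.eq.1 (by simp [Cardinal.mul_eq_self hκ.1.le])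
  have hπ : Function.Injective2 (fun s t => π (s, t)) :=
    fun _ _ _ _ h => Prod.mk.inj (π.injective h)
  have hnext : ∀ t : κ.ord.ToType, ∃ s : κ.ord.ToType,
      #(Iio t) < #(Iio s) ∧ IsSupercompactCard #(Iio s) := fun t => by
    obtain ⟨γ, hγ, hγκ, hsc⟩ := hunb _ (hlim.succ_lt (mk_Iio_toType_lt t))
    obtain ⟨s, rfl⟩ := exists_mk_Iio_eq hγκ
    exact ⟨s, (Order.lt_succ_of_not_isMax (not_isMax _)).trans_le hγ, hsc⟩
  choose g hg hgsc using hnext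
  obtain ⟨s₁, hs₁⟩ := exists_mk_Iio_eq (hlim.succ_lt hκ.1)
  obtain ⟨x, hx, hxg, hxs₁⟩ := ((eventually_isReflecting h𝒲 hn _).and
    ((hn.eventually_forall_mem_trace_mem h𝒲.eventually_mem g).and
      (h𝒲.eventually_mem {s₁}))).exists
  refine ⟨#(trace x), hx.trace_eq ▸ mk_Iio_toType_lt _, hx.isMeasurableCard hπ ?_,
    fun β hβ => ?_⟩
  · calc ℵ₀ < Order.succ ℵ₀ := Order.lt_succ_of_not_isMax (not_isMax _)
      _ = #(Iio s₁) := hs₁.symm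
      _ ≤ #(trace x) := Cardinal.mk_le_mk_of_subset fun t ht => by
        change s₁ ∈ trace x at hxs₁
        rw [hx.trace_eq] at hxs₁ ⊢
        exact lt_trans ht (mem_Iio.1 hxs₁)
  · rw [hx.trace_eq] at hxg hβ ⊢
    obtain ⟨t, hβt, hlt⟩ := exists_le_mk_Iio_map_lt hg hxg hβ
    exact ⟨_, hβt, hlt, hgsc t⟩

/-- If `κ` is the least measurable cardinal such that the set of
supercompact cardinals below `κ` is unbounded in `κ`, then `κ` is strongly compact but
not `2^κ` supercompact. -/
theorem least_measurable_limit_of_supercompact_stronglyCompact_not_two_pow_supercompact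
    (κ : Cardinal.{0})
    (hmeas : IsMeasurableCard κ)
    (hunb : ∀ β : Cardinal.{0}, β < κ →
      ∃ γ : Cardinal.{0}, β ≤ γ ∧ γ < κ ∧ IsSupercompactCard γ)
    (hleast : ∀ κ' : Cardinal.{0}, κ' < κ →
      ¬ (IsMeasurableCard κ' ∧ ∀ β : Cardinal.{0}, β < κ' →
          ∃ γ : Cardinal.{0}, β ≤ γ ∧ γ < κ' ∧ IsSupercompactCard γ)) :
    IsStronglyCompactCard κ ∧ ¬ IsLamSupercompact κ (2 ^ κ) := by
  refine ⟨hmeas.isStronglyCompactCard hunb, fun h => ?_⟩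
  obtain ⟨κ', hκ', hκ'_meas, hκ'_unb⟩ :=
    exists_lt_isMeasurableCard_of_isLamSupercompact hmeas hunb h
  exact hleast κ' hκ' ⟨hκ'_meas, hκ'_unb⟩
end

section
/- Let δ < λ be regular cardinals with δ inaccessible and λ > δ⁺, let S ⊆ λ be a set of ordinals each of cofinality δ and greater than δ, let X = ⟨x_β : β ∈ S⟩ be a sequence such that each x_β ⊆ β is cofinal in β and has order type δ, and let γ < δ be an infinite cardinal. If p₁ ≤ p₂ are conditions in P¹_{δ,λ}[S], then there is a condition q ∈ P¹_{δ,λ}[S] with p₁ ≤^γ q and p₂ ≤^γ q. -/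
open Cardinal

/-- The order type of a set of ordinals. -/
noncomputable def otype (s : Set Ordinal.{0}) : Ordinal.{1} :=
  Ordinal.type (Subrel ((· < ·) : Ordinal.{0} → Ordinal.{0} → Prop) (· ∈ s))

/-- A condition in `P¹_{δ,λ}[S]` (relative to the fixed `♣(S)`-sequence
`⟨x_β : β ∈ S⟩`): a `5`-tuple `⟨w, α, r̄, Z, Γ⟩` as described in the paper.  The functions
`Z` and `Γ`, whose domains are subsets of `{x_β : β ∈ S}`, are represented by the set `B`
of indices `β` together with total functions `Z` and `G` on ordinals (whose values are
only relevant on `B`); similarly `r̄ = ⟨r_i : i ∈ w⟩` is represented by a total function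
`r`, relevant only for `i ∈ w` and arguments `< bound`. -/
structure P1Cond (δ lam : Cardinal.{0}) (S : Set Ordinal.{0})
    (x : Ordinal.{0} → Set Ordinal.{0}) where
  /-- the support `w` -/
  w : Set Ordinal.{0}
  /-- the common domain `α` of the functions `r_i` -/
  bound : Ordinal.{0}
  /-- `r i ξ` is the value `r_i(ξ)` for `i ∈ w`, `ξ < bound` -/
  r : Ordinal.{0} → Ordinal.{0} → Bool
  /-- the set of `β ∈ S` with `x_β ∈ dom(Z) = dom(Γ)` -/
  B : Set Ordinal.{0}
  /-- `Z β` is the value `Z(x_β)` for `β ∈ B` -/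
  Z : Ordinal.{0} → Bool
  /-- `G β` is the value `Γ(x_β)` for `β ∈ B` -/
  G : Ordinal.{0} → Set Ordinal.{0}
  w_sub : w ⊆ Set.Iio lam.ord
  w_card : #w = Cardinal.lift.{1} δ
  bound_lt : bound < δ.ord
  B_sub : B ⊆ S
  Z_cond : ∀ β ∈ B, ∃ y : Set Ordinal.{0}, y ⊆ x β ∩ w ∧ #y = Cardinal.lift.{1} δ ∧
    ∃ b < β, x β \ y ⊆ Set.Iio b
  G_bdd : ∀ β ∈ B, G β ⊆ Set.Iio bound
  G_closed : ∀ β ∈ B, ∀ s : Set Ordinal.{0}, s ⊆ G β → s.Nonempty → sSup s ∈ G β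
  G_cond : ∀ β ∈ B, ∀ ξ ∈ G β, (∃ c : Cardinal.{0}, ξ = c.ord ∧ c.IsInaccessible) →
    ∀ b ∈ x β, otype {c | c ∈ x β ∧ c < b} = Ordinal.lift.{1} ξ →
      b ∈ w ∧ ∃ b', b' < b ∧ b' ∈ w ∧ b' ∈ x β ∧ r b' ξ = Z β

/-- The ordering on `P¹_{δ,λ}[S]`. -/
def P1Cond.le {δ lam : Cardinal.{0}} {S : Set Ordinal.{0}}
    {x : Ordinal.{0} → Set Ordinal.{0}} (p q : P1Cond δ lam S x) : Prop :=
  p.w ⊆ q.w ∧ p.bound ≤ q.bound ∧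
    (∀ i ∈ p.w, ∀ ξ < p.bound, p.r i ξ = q.r i ξ) ∧
    #{i : Ordinal.{0} | i ∈ p.w ∧ ∃ ξ, p.bound ≤ ξ ∧ ξ < q.bound ∧ q.r i ξ ≠ false} <
      Cardinal.lift.{1} δ ∧
    p.B ⊆ q.B ∧ (∀ β ∈ p.B, p.Z β = q.Z β) ∧
    (∀ β ∈ p.B, p.G β ⊆ q.G β ∧ ∀ ξ ∈ q.G β, ξ ∉ p.G β → ∀ η ∈ p.G β, η < ξ) ∧
    #{β : Ordinal.{0} | β ∈ p.B ∧ p.G β ≠ q.G β} < Cardinal.lift.{1} δ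

/-- The auxiliary ordering `≤^γ` on `P¹_{δ,λ}[S]`: `p ≤^γ q` iff `p = q`, or `p < q` and
every `Γ`-value changed from `p` to `q` acquires a maximum above `γ`. -/
def P1Cond.leGamma {δ lam : Cardinal.{0}} {S : Set Ordinal.{0}}
    {x : Ordinal.{0} → Set Ordinal.{0}} (γ : Cardinal.{0})
    (p q : P1Cond δ lam S x) : Prop :=
  p = q ∨ (p.le q ∧ p ≠ q ∧ ∀ β ∈ p.B, p.G β ≠ q.G β → γ.ord < sSup (q.G β))


open Cardinal

/-! The condition `p₂` itself, raised by one point, amalgamates `p₁ ≤ p₂`: extend the common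
domain `α` of the `r_i` by zeros past a successor ordinal `η > γ`, and append `η` to every
`Γ(z)` on which `p₁` and `p₂` differ. Being a successor, `η` is not inaccessible, so appending it
imposes no new requirement, and every `Γ(z)` changed from `p₁` or from `p₂` now has
maximum `η > γ`. -/

theorem sSup_mem_insert_of_subset_Iic {α : Type*} [ConditionallyCompleteLattice α]
    {s t : Set α} {a : α} (hs : s ⊆ Set.Iic a) (hclosed : ∀ u ⊆ s, u.Nonempty → sSup u ∈ s)
    (ht : t ⊆ insert a s) (hne : t.Nonempty) : sSup t ∈ insert a s := by
  by_cases ha : a ∈ t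
  · have : IsGreatest t a := ⟨ha, fun b hb => (ht hb).elim le_of_eq (hs ·)⟩
    exact this.csSup_eq ▸ Set.mem_insert a s
  · exact Set.mem_insert_of_mem a
      (hclosed t (fun b hb => (ht hb).resolve_left (ne_of_mem_of_not_mem hb ha)) hne)

namespace P1Cond

variable {δ lam : Cardinal.{0}} {S : Set Ordinal.{0}} {x : Ordinal.{0} → Set Ordinal.{0}}

theorem G_subset_Iic (p : P1Cond δ lam S x) {β η : Ordinal.{0}} (hβ : β ∈ p.B)
    (hbound : p.bound ≤ η) : p.G β ⊆ Set.Iic η :=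
  fun _ hξ => ((p.G_bdd β hβ hξ).trans_le hbound).le

theorem le.trans {p q r : P1Cond δ lam S x} (hpq : p.le q) (hδ : ℵ₀ ≤ δ) (hqr : q.le r) :
    p.le r := by
  obtain ⟨hw₁, hb₁, hr₁, hc₁, hB₁, hZ₁, hG₁, hn₁⟩ := hpq
  obtain ⟨hw₂, hb₂, hr₂, hc₂, hB₂, hZ₂, hG₂, hn₂⟩ := hqr
  have hδ' : ℵ₀ ≤ lift.{1} δ := aleph0_le_lift.2 hδ
  refine ⟨hw₁.trans hw₂, hb₁.trans hb₂,
    fun i hi ξ hξ => (hr₁ i hi ξ hξ).trans (hr₂ i (hw₁ hi) ξ (hξ.trans_le hb₁)), ?_,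
    hB₁.trans hB₂, fun β hβ => (hZ₁ β hβ).trans (hZ₂ β (hB₁ hβ)), fun β hβ => ?_, ?_⟩
  · refine (mk_le_mk_of_subset ?_).trans_lt
      ((mk_union_le _ _).trans_lt (add_lt_of_lt hδ' hc₁ hc₂))
    rintro i ⟨hi, ξ, hpξ, hξr, hrξ⟩
    by_cases hξq : ξ < q.bound
    · exact Or.inl ⟨hi, ξ, hpξ, hξq, (hr₂ i (hw₁ hi) ξ hξq).trans_ne hrξ⟩
    · exact Or.inr ⟨hw₁ hi, ξ, not_lt.1 hξq, hξr, hrξ⟩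
  · obtain ⟨hsub₁, hnew₁⟩ := hG₁ β hβ
    obtain ⟨hsub₂, hnew₂⟩ := hG₂ β (hB₁ hβ)
    refine ⟨hsub₁.trans hsub₂, fun ξ hξ hξp ζ hζ => ?_⟩
    by_cases hξq : ξ ∈ q.G β
    · exact hnew₁ ξ hξq hξp ζ hζ
    · exact hnew₂ ξ hξ hξq ζ (hsub₁ hζ)
  · refine (mk_le_mk_of_subset ?_).trans_lt
      ((mk_union_le _ _).trans_lt (add_lt_of_lt hδ' hn₁ hn₂))
    rintro β ⟨hβ, hne⟩
    by_cases hpq : p.G β = q.G β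
    · exact Or.inr ⟨hB₁ hβ, hpq ▸ hne⟩
    · exact Or.inl ⟨hβ, hpq⟩

theorem leGamma_of_le {γ : Cardinal.{0}} {p q : P1Cond δ lam S x} (h : p.le q)
    (hG : ∀ β ∈ p.B, p.G β ≠ q.G β → γ.ord < sSup (q.G β)) : leGamma γ p q :=
  (em (p = q)).imp id fun hpq => ⟨h, hpq, hG⟩

section extend

open Classical

variable (p : P1Cond δ lam S x) (D : Set Ordinal.{0}) (η : Ordinal.{0})
  (hbound : p.bound ≤ η) (hηδ : Order.succ η < δ.ord) (hη : ¬ Order.IsSuccLimit η)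

noncomputable def extend : P1Cond δ lam S x where
  w := p.w
  bound := Order.succ η
  r i ξ := if ξ < p.bound then p.r i ξ else false
  B := p.B
  Z := p.Z
  G β := if β ∈ D then insert η (p.G β) else p.G β
  w_sub := p.w_sub
  w_card := p.w_card
  bound_lt := hηδ
  B_sub := p.B_sub
  Z_cond := p.Z_cond
  G_bdd β hβ := by
    have hG : p.G β ⊆ Set.Iio (Order.succ η) := by
      rw [Order.Iio_succ]
      exact p.G_subset_Iic hβ hbound
    split_ifs
    exacts [Set.insert_subset (Order.lt_succ η) hG, hG]
  G_closed β hβ := by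
    split_ifs
    exacts [fun _ => sSup_mem_insert_of_subset_Iic (p.G_subset_Iic hβ hbound) (p.G_closed β hβ),
      p.G_closed β hβ]
  G_cond β hβ ξ hξ hinacc b hb hot := by
    have hξp : ξ ∈ p.G β := by
      split_ifs at hξ with hβD
      · obtain ⟨c, hcξ, hc⟩ := hinacc
        refine hξ.resolve_left fun hξη => hη ?_
        exact hξη ▸ hcξ ▸ isSuccLimit_ord hc.aleph0_lt.le
      · exact hξ
    obtain ⟨hbw, b', hb'b, hb'w, hb'x, hr⟩ := p.G_cond β hβ ξ hξp hinacc b hb hot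
    exact ⟨hbw, b', hb'b, hb'w, hb'x, (if_pos (p.G_bdd β hβ hξp)).trans hr⟩

variable {p D η}

theorem extend_G_of_notMem {β : Ordinal.{0}} (hβD : β ∉ D) :
    (p.extend D η hbound hηδ hη).G β = p.G β :=
  if_neg hβD

theorem extend_G_of_mem {β : Ordinal.{0}} (hβD : β ∈ D) :
    (p.extend D η hbound hηδ hη).G β = insert η (p.G β) :=
  if_pos hβD

theorem sSup_extend_G {β : Ordinal.{0}} (hβ : β ∈ p.B) (hβD : β ∈ D) :
    sSup ((p.extend D η hbound hηδ hη).G β) = η := by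
  have : IsGreatest (insert η (p.G β)) η :=
    ⟨Set.mem_insert η _, Set.insert_subset_iff.2 ⟨Set.mem_Iic.2 le_rfl, p.G_subset_Iic hβ hbound⟩⟩
  rw [extend_G_of_mem hbound hηδ hη hβD, this.csSup_eq]

theorem le_extend (hD : #D < lift.{1} δ) : p.le (p.extend D η hbound hηδ hη) := by
  refine ⟨subset_rfl, hbound.trans (Order.le_succ η), fun i _ ξ hξ => (if_pos hξ).symm, ?_,
    subset_rfl, fun _ _ => rfl, fun β hβ => ?_, ?_⟩
  · refine (le_of_eq ?_).trans_lt (pos_of_gt hD)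
    rw [mk_eq_zero_iff, isEmpty_subtype]
    rintro i ⟨-, ξ, hξ, -, hr⟩
    exact hr (if_neg (not_lt.2 hξ))
  · by_cases hβD : β ∈ D
    · rw [extend_G_of_mem hbound hηδ hη hβD]
      refine ⟨Set.subset_insert η _, fun ξ hξ hξp ζ hζ => ?_⟩
      exact hξ.elim (fun hξη => hξη ▸ (p.G_bdd β hβ hζ).trans_le hbound) (absurd · hξp)
    · rw [extend_G_of_notMem hbound hηδ hη hβD]
      exact ⟨subset_rfl, fun ξ hξ hξp => absurd hξ hξp⟩
  · refine (mk_le_mk_of_subset fun β hβ => ?_).trans_lt hD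
    by_contra hβD
    exact hβ.2 (extend_G_of_notMem hbound hηδ hη hβD).symm

end extend

end P1Cond

theorem P1_leGamma_amalgamation_general (δ lam : Cardinal.{0})
    (hδreg : δ.IsRegular)
    (S : Set Ordinal.{0})
    (x : Ordinal.{0} → Set Ordinal.{0})
    (γ : Cardinal.{0}) (hγlt : γ < δ)
    (p₁ p₂ : P1Cond δ lam S x) (hle : p₁.le p₂) :
    ∃ q : P1Cond δ lam S x, P1Cond.leGamma γ p₁ q ∧ P1Cond.leGamma γ p₂ q := by
  have hδ := hδreg.aleph0_le
  have ⟨_, _, _, _, hB, _, _, hGcard⟩ := hle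
  set D := {β | β ∈ p₁.B ∧ p₁.G β ≠ p₂.G β}
  set η := Order.succ (max p₂.bound γ.ord)
  have hbound : p₂.bound ≤ η := (le_max_left _ _).trans (Order.le_succ _)
  have hγη : γ.ord < η := Order.lt_succ_of_le (le_max_right _ _)
  have hηδ : Order.succ η < δ.ord := by
    have hδlim := isSuccLimit_ord hδ
    exact hδlim.succ_lt (hδlim.succ_lt (max_lt p₂.bound_lt (ord_lt_ord.2 hγlt)))
  set q := p₂.extend D η hbound hηδ (Order.not_isSuccLimit_succ _)
  have hp₂q : p₂.le q := P1Cond.le_extend hbound hηδ _ hGcard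
  have hsup : ∀ β ∈ D, γ.ord < sSup (q.G β) := fun β hβ => by
    rwa [P1Cond.sSup_extend_G hbound hηδ _ (hB hβ.1) hβ]
  refine ⟨q, P1Cond.leGamma_of_le (hle.trans hδ hp₂q) fun β hβ hne => hsup β ?_,
    P1Cond.leGamma_of_le hp₂q fun β _ hne => hsup β ?_⟩
  all_goals
    by_contra hβD
    rw [P1Cond.extend_G_of_notMem hbound hηδ _ hβD] at hne
  · exact hβD ⟨hβ, hne⟩
  · exact hne rfl

/-- If `p₁ ≤ p₂` in `P¹_{δ,λ}[S]`, then there is a condition `q` with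
`p₁ ≤^γ q` and `p₂ ≤^γ q`. -/
theorem P1_leGamma_amalgamation (δ lam : Cardinal.{0})
    (hδreg : δ.IsRegular) (hlamreg : lam.IsRegular)
    (hδinacc : δ.IsInaccessible) (hlt : δ < lam) (hlam_gt : Order.succ δ < lam)
    (S : Set Ordinal.{0}) (hS_sub : S ⊆ Set.Iio lam.ord)
    (hS_cof : ∀ β ∈ S, Ordinal.cof β = δ) (hS_gt : ∀ β ∈ S, δ.ord < β)
    (x : Ordinal.{0} → Set Ordinal.{0})
    (hx_sub : ∀ β ∈ S, x β ⊆ Set.Iio β)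
    (hx_cofinal : ∀ β ∈ S, ∀ c < β, ∃ d ∈ x β, c ≤ d)
    (hx_ot : ∀ β ∈ S, otype (x β) = Ordinal.lift.{1} δ.ord)
    (γ : Cardinal.{0}) (hγinf : ℵ₀ ≤ γ) (hγlt : γ < δ)
    (p₁ p₂ : P1Cond δ lam S x) (hle : p₁.le p₂) :
    ∃ q : P1Cond δ lam S x, P1Cond.leGamma γ p₁ q ∧ P1Cond.leGamma γ p₂ q :=
  P1_leGamma_amalgamation_general δ lam hδreg S x γ hγlt p₁ p₂ hle
end
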